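/- Let T be a finite tree of diameter d and let P = v₀v₁⋯v_d be a diametrical path of T containing all central vertices of T. Then for each i with 0 ≤ i ≤ ⌊d/2⌋ − 1, one has ε₃(v_{i+1};T) ≤ ε₃(v_i;T) ≤ ε₃(v_{i+1};T) + 1, and for each i with ⌊d/2⌋ ≤ i ≤ d − 1, one has ε₃(v_i;T) ≤ ε₃(v_{i+1};T) ≤ ε₃(v_i;T) + 1. Consequently, among the vertices of P, the central vertices attain the minimum Fermat eccentricity. -/

import Mathlib

open SimpleGraph Finset

variable {V : Type*}

/-- The Fermat distance of a vertex triple: minimum over all vertices σ of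
    `d(σ,u) + d(σ,v) + d(σ,w)`. -/
noncomputable def fermatDist (G : SimpleGraph V) (u v w : V) : ℕ :=
  ⨅ σ : V, (G.dist σ u + G.dist σ v + G.dist σ w)

/-- The Fermat eccentricity `ε₃(u;G)`: maximum Fermat distance of triples containing `u`. -/
noncomputable def fermatEcc [Fintype V] (G : SimpleGraph V) (u : V) : ℕ :=
  Finset.univ.sup fun p : V × V => fermatDist G u p.1 p.2

/-- The ordinary eccentricity `ε₂(u;G)`. -/
noncomputable def ecc2 [Fintype V] (G : SimpleGraph V) (u : V) : ℕ :=
  Finset.univ.sup fun v => G.dist u v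

/-- The diameter of `G`. -/
noncomputable def gdiam [Fintype V] (G : SimpleGraph V) : ℕ :=
  Finset.univ.sup fun p : V × V => G.dist p.1 p.2

/-- A central vertex: one minimizing the ordinary eccentricity. -/
def isCentral [Fintype V] (G : SimpleGraph V) (c : V) : Prop :=
  ∀ u : V, ecc2 G c ≤ ecc2 G u

/-- The number of edges of `G`. -/
noncomputable def numEdges [Fintype V] (G : SimpleGraph V) : ℕ :=
  letI := Classical.decEq V
  letI := Classical.decRel G.Adj
  G.edgeFinset.card

/-- The first Zagreb–Fermat eccentricity index `F₁(G) = Σ_u ε₃(u)²`. -/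
noncomputable def F1 [Fintype V] (G : SimpleGraph V) : ℕ :=
  ∑ u : V, (fermatEcc G u) ^ 2

/-- The second Zagreb–Fermat eccentricity index `F₂(G) = Σ_{uv ∈ E} ε₃(u)·ε₃(v)`. -/
noncomputable def F2 [Fintype V] (G : SimpleGraph V) : ℕ :=
  letI := Classical.decEq V
  letI := Classical.decRel G.Adj
  ∑ e ∈ G.edgeFinset,
    Sym2.lift ⟨fun u v => fermatEcc G u * fermatEcc G v, fun _ _ => mul_comm _ _⟩ e

/-- `u` lies in the subtree `T_{v_i}` hanging off the `i`-th vertex of the path `P`: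
its geodesic to every vertex of `P` passes through `P.getVert i`. -/
def inSubtree (G : SimpleGraph V) {a b : V} (P : G.Walk a b) (i : ℕ) (u : V) : Prop :=
  ∀ j ≤ P.length, G.dist u (P.getVert j) = G.dist u (P.getVert i) + G.dist (P.getVert i) (P.getVert j)

/-- `ℓ_i`: the height of the subtree `T_{v_i}`. -/
noncomputable def subtreeHeight [Fintype V] (G : SimpleGraph V) {a b : V} (P : G.Walk a b)
    (i : ℕ) : ℕ :=
  letI := Classical.decPred (inSubtree G P i)
  Finset.univ.sup fun u => if inSubtree G P i u then G.dist (P.getVert i) u else 0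

/-!
In a tree the Fermat distance of a triple is half its perimeter,
`2 F(u,x,y) = d(u,x) + d(u,y) + d(x,y)`, since the three geodesics meet at a median vertex.
Along a path `v₀ ⋯ v_d` the distance to any fixed vertex is valley-shaped with unit slopes, so
stepping from `v_i` to `v_{i+1}` changes `d(·,x)` and `d(·,y)` by `±1` each. If one of them
decreases, the perimeter does not grow. If both grow, then `x` and `y` hang off the path at or
before `v_i`; as the path is diametrical, `d(y, v_i) ≤ i < d - i`, and the pair `(x, v_d)`
already gives `v_i` a perimeter at least that of `(x, y)` at `v_{i+1}`. Hence `ε₃` decreases up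
to the middle of the path and (reversing it) increases afterwards, and central vertices sit at
positions `⌊d/2⌋` and `⌈d/2⌉`.
-/

/-- `(m - j) + (j - m)` is `|m - j|` in `ℕ`. -/
theorem exists_valley {f : ℕ → ℕ} {L : ℕ}
    (hstep : ∀ m < L, f m = f (m + 1) + 1 ∨ f (m + 1) = f m + 1)
    (hpeak : ∀ m, m + 2 ≤ L → f (m + 1) = f m + 1 → f (m + 2) = f (m + 1) + 1) :
    ∃ j ≤ L, ∀ m ≤ L, f m = f j + (m - j) + (j - m) := by
  induction L with
  | zero => exact ⟨0, le_rfl, fun m hm => by obtain rfl : m = 0 := (by omega); simp⟩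
  | succ L ih =>
    obtain ⟨j, hjL, hj⟩ := ih (fun m hm => hstep m (by omega)) (fun m hm => hpeak m (by omega))
    rcases hstep L L.lt_succ_self with hdown | hup
    · obtain rfl : j = L := by
        by_contra hne
        obtain ⟨k, rfl⟩ : ∃ k, L = k + 1 := ⟨L - 1, by omega⟩
        have := hpeak k le_rfl (by have := hj k (by omega); have := hj (k + 1) le_rfl; omega)
        rw [show k + 2 = k + 1 + 1 from rfl] at this
        omega
      refine ⟨j + 1, le_rfl, fun m hm => ?_⟩
      rcases hm.lt_or_eq with hm | rfl
      · have := hj m (by omega)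
        omega
      · simp
    · refine ⟨j, by omega, fun m hm => ?_⟩
      rcases hm.lt_or_eq with hm | rfl
      · exact hj m (by omega)
      · have := hj L le_rfl
        omega

theorem apply_middle_le {α : Type*} [Preorder α] {f : ℕ → α} {L : ℕ}
    (hdec : ∀ i, 2 * i + 1 ≤ L → f (i + 1) ≤ f i)
    (hinc : ∀ i, L ≤ 2 * i + 1 → f i ≤ f (i + 1))
    {m : ℕ} (hm₁ : L / 2 ≤ m) (hm₂ : m ≤ L - L / 2) (i : ℕ) : f m ≤ f i := by
  rcases le_total m i with hmi | him
  · exact Nat.rel_of_forall_rel_succ_of_le_of_le (· ≤ ·) (fun n hn => hinc n (by omega)) hm₁ hmi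
  · clear hm₁
    induction m, him using Nat.le_induction with
    | base => exact le_rfl
    | succ n _ ih => exact (hdec n (by omega)).trans (ih (by omega))

namespace SimpleGraph

variable {G T : SimpleGraph V} {a b : V}

theorem Walk.dist_getVert_succ_le_one (p : G.Walk a b) (i : ℕ) :
    G.dist (p.getVert i) (p.getVert (i + 1)) ≤ 1 := by
  rcases lt_or_ge i p.length with hi | hi
  · exact (dist_eq_one_iff_adj.mpr (p.adj_getVert_succ hi)).le
  · rw [p.getVert_of_length_le hi, p.getVert_of_length_le (by omega), dist_self]
    exact zero_le_one

theorem IsTree.eq_of_adj_of_dist_eq_add_one (hT : T.IsTree) {x c : V}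
    (hac : T.Adj a c) (hbc : T.Adj b c)
    (ha : T.dist x c = T.dist x a + 1) (hb : T.dist x c = T.dist x b + 1) : a = b := by
  obtain ⟨p, hp⟩ := hT.connected.exists_walk_length_eq_dist x a
  obtain ⟨q, hq⟩ := hT.connected.exists_walk_length_eq_dist x b
  have hpc : (p.concat hac).IsPath :=
    (p.concat hac).isPath_of_length_eq_dist (by rw [Walk.length_concat, hp, ha])
  have hqc : (q.concat hbc).IsPath :=
    (q.concat hbc).isPath_of_length_eq_dist (by rw [Walk.length_concat, hq, hb])
  obtain ⟨rfl, -⟩ := Walk.concat_inj <| congrArg Subtype.val <|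
    (hT.isAcyclic.subsingleton_path x c).elim ⟨_, hpc⟩ ⟨_, hqc⟩
  rfl

section TreePath

variable (hT : T.IsTree) {P : T.Walk a b} (hP : P.IsPath)
include hT hP

theorem IsTree.exists_dist_getVert_eq (x : V) :
    ∃ j ≤ P.length, ∀ m ≤ P.length,
      T.dist x (P.getVert m) = T.dist x (P.getVert j) + (m - j) + (j - m) := by
  refine exists_valley (fun m hm => hT.dist_eq_dist_add_one_of_adj x (P.adj_getVert_succ hm))
    fun m hm hup => ?_
  refine (hT.dist_eq_dist_add_one_of_adj x (P.adj_getVert_succ (i := m + 1) hm)).resolve_left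
    fun hdown => ?_
  have := hP.getVert_injOn (by simp only [Set.mem_ofPred_eq]; omega)
    (by simp only [Set.mem_ofPred_eq]; omega) <| hT.eq_of_adj_of_dist_eq_add_one
      (P.adj_getVert_succ (i := m) (by omega)) (P.adj_getVert_succ (i := m + 1) hm).symm hup hdown
  omega

theorem IsTree.dist_getVert {j m : ℕ} (hj : j ≤ P.length) (hm : m ≤ P.length) :
    T.dist (P.getVert j) (P.getVert m) = (m - j) + (j - m) := by
  obtain ⟨k, -, hk⟩ := hT.exists_dist_getVert_eq hP (P.getVert j)
  have hjj := hk j hj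
  rw [dist_self] at hjj
  have := hk m hm
  omega

theorem IsTree.dist_getVert_of_dist_getVert_succ {x : V} {i : ℕ} (hi : i < P.length)
    (hx : T.dist x (P.getVert (i + 1)) = T.dist x (P.getVert i) + 1) {m : ℕ} (him : i ≤ m)
    (hm : m ≤ P.length) : T.dist x (P.getVert m) = T.dist x (P.getVert i) + (m - i) := by
  obtain ⟨j, -, hj⟩ := hT.exists_dist_getVert_eq hP x
  have := hj i hi.le
  have := hj (i + 1) hi
  have := hj m hm
  omega

end TreePath

end SimpleGraph

section Eccentricity

variable {G : SimpleGraph V}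

theorem fermatDist_le (σ u v w : V) :
    fermatDist G u v w ≤ G.dist σ u + G.dist σ v + G.dist σ w :=
  ciInf_le (OrderBot.bddBelow _) σ

theorem exists_fermatDist_eq (u v w : V) :
    ∃ σ, fermatDist G u v w = G.dist σ u + G.dist σ v + G.dist σ w :=
  have : Nonempty V := ⟨u⟩
  (ciInf_mem _).imp fun _ h => h.symm

theorem SimpleGraph.Connected.perimeter_le_two_mul_fermatDist (hG : G.Connected) (u v w : V) :
    G.dist u v + G.dist u w + G.dist v w ≤ 2 * fermatDist G u v w := by
  obtain ⟨σ, hσ⟩ := exists_fermatDist_eq (G := G) u v w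
  have := hG.dist_triangle (u := u) (v := σ) (w := v)
  have := hG.dist_triangle (u := u) (v := σ) (w := w)
  have := hG.dist_triangle (u := v) (v := σ) (w := w)
  have := dist_comm (G := G) (u := u) (v := σ)
  have := dist_comm (G := G) (u := v) (v := σ)
  omega

theorem fermatDist_le_fermatDist_add_dist (hG : G.Connected) (a b v w : V) :
    fermatDist G a v w ≤ fermatDist G b v w + G.dist a b := by
  obtain ⟨σ, hσ⟩ := exists_fermatDist_eq (G := G) b v w
  have := fermatDist_le (G := G) σ a v w
  have := hG.dist_triangle (u := σ) (v := b) (w := a)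
  have := dist_comm (G := G) (u := a) (v := b)
  omega

variable [Fintype V]

theorem fermatDist_le_fermatEcc (u v w : V) : fermatDist G u v w ≤ fermatEcc G u :=
  Finset.le_sup (f := fun p : V × V => fermatDist G u p.1 p.2) (mem_univ (v, w))

theorem fermatEcc_le {u : V} {n : ℕ} (h : ∀ v w, fermatDist G u v w ≤ n) : fermatEcc G u ≤ n :=
  Finset.sup_le fun p _ => h p.1 p.2

theorem fermatEcc_le_fermatEcc_add_dist (hG : G.Connected) (a b : V) :
    fermatEcc G a ≤ fermatEcc G b + G.dist a b :=
  fermatEcc_le fun v w => (fermatDist_le_fermatDist_add_dist hG a b v w).trans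
    (Nat.add_le_add_right (fermatDist_le_fermatEcc b v w) _)

theorem dist_le_ecc2 (u v : V) : G.dist u v ≤ ecc2 G u :=
  Finset.le_sup (f := fun v => G.dist u v) (mem_univ v)

theorem ecc2_le {u : V} {n : ℕ} (h : ∀ v, G.dist u v ≤ n) : ecc2 G u ≤ n :=
  Finset.sup_le fun v _ => h v

theorem dist_le_gdiam (u v : V) : G.dist u v ≤ gdiam G :=
  Finset.le_sup (f := fun p : V × V => G.dist p.1 p.2) (mem_univ (u, v))

end Eccentricity

namespace SimpleGraph.IsTree

variable {T : SimpleGraph V} (hT : T.IsTree)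
include hT

/-- The median of `u, v, w` lies on the geodesic from `v` to `w`, at its vertex nearest to `u`. -/
theorem two_mul_fermatDist (u v w : V) :
    2 * fermatDist T u v w = T.dist u v + T.dist u w + T.dist v w := by
  refine le_antisymm ?_ (hT.connected.perimeter_le_two_mul_fermatDist u v w)
  obtain ⟨p, hp, hpl⟩ := hT.connected.exists_path_of_dist v w
  obtain ⟨j, hj, hval⟩ := hT.exists_dist_getVert_eq hp u
  have hv := hval 0 (Nat.zero_le _)
  have hw := hval p.length le_rfl
  rw [p.getVert_zero] at hv
  rw [p.getVert_length] at hw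
  have hjv := hT.dist_getVert hp hj (Nat.zero_le _)
  have hjw := hT.dist_getVert hp hj le_rfl
  rw [p.getVert_zero] at hjv
  rw [p.getVert_length] at hjw
  have := fermatDist_le (G := T) (p.getVert j) u v w
  have := dist_comm (G := T) (u := u) (v := p.getVert j)
  omega

variable [Fintype V] {a b : V} {P : T.Walk a b} (hP : P.IsPath) (hdiam : P.length = gdiam T)
include hP hdiam

theorem fermatEcc_getVert_succ_le {i : ℕ} (hi : 2 * i + 1 ≤ P.length) :
    fermatEcc T (P.getVert (i + 1)) ≤ fermatEcc T (P.getVert i) := by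
  refine fermatEcc_le fun x y => ?_
  set L := P.length
  have hper := hT.two_mul_fermatDist (P.getVert (i + 1)) x y
  have hx₁ := dist_comm (G := T) (u := x) (v := P.getVert (i + 1))
  have hy₁ := dist_comm (G := T) (u := y) (v := P.getVert (i + 1))
  have hx₀ := dist_comm (G := T) (u := x) (v := P.getVert i)
  have hy₀ := dist_comm (G := T) (u := y) (v := P.getVert i)
  by_cases hfar : T.dist x (P.getVert (i + 1)) = T.dist x (P.getVert i) + 1 ∧
      T.dist y (P.getVert (i + 1)) = T.dist y (P.getVert i) + 1
  · obtain ⟨hx, hy⟩ := hfar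
    have hxL := hT.dist_getVert_of_dist_getVert_succ hP (by omega) hx (m := L) (by omega) le_rfl
    have hyL := hT.dist_getVert_of_dist_getVert_succ hP (by omega) hy (m := L) (by omega) le_rfl
    have hyD : T.dist y (P.getVert L) ≤ L := (dist_le_gdiam y _).trans_eq hdiam.symm
    have hiL := hT.dist_getVert hP (j := i) (m := L) (by omega) le_rfl
    have hxy := hT.connected.dist_triangle (u := x) (v := P.getVert i) (w := y)
    have hw := hT.two_mul_fermatDist (P.getVert i) x (P.getVert L)
    have := fermatDist_le_fermatEcc (G := T) (P.getVert i) x (P.getVert L)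
    omega
  · have hx := hT.dist_eq_dist_add_one_of_adj x (P.adj_getVert_succ (i := i) (by omega))
    have hy := hT.dist_eq_dist_add_one_of_adj y (P.adj_getVert_succ (i := i) (by omega))
    have h₀ := hT.two_mul_fermatDist (P.getVert i) x y
    have := fermatDist_le_fermatEcc (G := T) (P.getVert i) x y
    omega

theorem fermatEcc_getVert_le_succ {i : ℕ} (hi : P.length ≤ 2 * i + 1) :
    fermatEcc T (P.getVert i) ≤ fermatEcc T (P.getVert (i + 1)) := by
  rcases lt_or_ge i P.length with hiL | hiL
  · have := hT.fermatEcc_getVert_succ_le hP.reverse (by rwa [Walk.length_reverse])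
      (i := P.length - 1 - i) (by rw [Walk.length_reverse]; omega)
    rw [Walk.getVert_reverse, Walk.getVert_reverse] at this
    convert this using 3 <;> omega
  · rw [P.getVert_of_length_le hiL, P.getVert_of_length_le (by omega)]

theorem ecc2_getVert_le {i : ℕ} (hi : i ≤ P.length) :
    ecc2 T (P.getVert i) ≤ max i (P.length - i) := by
  refine ecc2_le fun u => ?_
  obtain ⟨j, hj, hval⟩ := hT.exists_dist_getVert_eq hP u
  have h₀ := hval 0 (Nat.zero_le _)
  have hL := hval P.length le_rfl
  have hi' := hval i hi
  have := dist_le_gdiam (G := T) u (P.getVert 0)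
  have := dist_le_gdiam (G := T) u (P.getVert P.length)
  rw [dist_comm]
  omega

theorem mem_middle_of_isCentral {i : ℕ} (hi : i ≤ P.length) (hc : isCentral T (P.getVert i)) :
    P.length / 2 ≤ i ∧ i ≤ P.length - P.length / 2 := by
  have hecc : ecc2 T (P.getVert i) ≤ P.length - P.length / 2 :=
    (hc _).trans <| (hT.ecc2_getVert_le hP hdiam (Nat.div_le_self P.length 2)).trans (by omega)
  have h₀ := dist_le_ecc2 (G := T) (P.getVert i) (P.getVert 0)
  have hL := dist_le_ecc2 (G := T) (P.getVert i) (P.getVert P.length)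
  rw [hT.dist_getVert hP hi (Nat.zero_le _)] at h₀
  rw [hT.dist_getVert hP hi le_rfl] at hL
  omega

end SimpleGraph.IsTree

/-- Along a diametrical path `v₀v₁⋯v_d` of a finite tree containing all central
vertices, the Fermat eccentricity weakly decreases (by steps of at most 1) from `v₀` to the
center and weakly increases from the center to `v_d`; consequently among the vertices of the
path the central vertices attain the minimum Fermat eccentricity. -/
theorem fermatEcc_monotone_on_diametrical_path [Fintype V] (T : SimpleGraph V) (hT : T.IsTree)
    {v₀ vd : V} (P : T.Walk v₀ vd) (hP : P.IsPath) (d : ℕ) (hlen : P.length = d)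
    (hdiam : d = gdiam T)
    (hcentral : ∀ c : V, isCentral T c → ∃ i ≤ d, P.getVert i = c) :
    (∀ i : ℕ, i + 1 ≤ d / 2 →
      fermatEcc T (P.getVert (i + 1)) ≤ fermatEcc T (P.getVert i) ∧
      fermatEcc T (P.getVert i) ≤ fermatEcc T (P.getVert (i + 1)) + 1) ∧
    (∀ i : ℕ, d / 2 ≤ i → i ≤ d - 1 →
      fermatEcc T (P.getVert i) ≤ fermatEcc T (P.getVert (i + 1)) ∧
      fermatEcc T (P.getVert (i + 1)) ≤ fermatEcc T (P.getVert i) + 1) ∧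
    (∀ c : V, isCentral T c → ∀ i ≤ d, fermatEcc T c ≤ fermatEcc T (P.getVert i)) := by
  subst hlen
  have hdec := fun i => hT.fermatEcc_getVert_succ_le hP hdiam (i := i)
  have hinc := fun i => hT.fermatEcc_getVert_le_succ hP hdiam (i := i)
  have hnear (i j : ℕ) (hij : i + 1 = j ∨ j + 1 = i) :
      fermatEcc T (P.getVert i) ≤ fermatEcc T (P.getVert j) + 1 := by
    refine (fermatEcc_le_fermatEcc_add_dist hT.connected _ _).trans (Nat.add_le_add_left ?_ _)
    rcases hij with rfl | rfl
    · exact P.dist_getVert_succ_le_one i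
    · exact dist_comm.trans_le (P.dist_getVert_succ_le_one j)
  refine ⟨fun i hi => ⟨hdec i (by omega), hnear _ _ (.inl rfl)⟩,
    fun i hi _ => ⟨hinc i (by omega), hnear _ _ (.inr rfl)⟩, fun c hc i _ => ?_⟩
  obtain ⟨i₀, hi₀, rfl⟩ := hcentral c hc
  obtain ⟨h₁, h₂⟩ := hT.mem_middle_of_isCentral hP hdiam hi₀ hc
  exact apply_middle_le (f := fun i => fermatEcc T (P.getVert i)) hdec hinc h₁ h₂ i
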